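/- arXiv:1601.05460 — 3 statements merged into one kernel-verified Lean document; each statement's English description precedes it below -/
import Mathlib

section
/- For coprime M, N, the map j ↦ (j mod N scaled appropriately) gives an isomorphism of abelian groups Z/MN ≅ Z/M × Z/N under which the quadratic form kj²/(MN) mod 1 corresponds to (kN b²/M + kM a²/N) mod 1. -/
/-!
Rescale the Chinese remainder isomorphism so that `j ↦ (b, a)` with `N b ≡ j (mod M)` and
`M a ≡ j (mod N)`. Then `N²b² + M²a² ≡ j²` both mod `M` and mod `N`, hence mod `MN`, so
`k N b²/M + k M a²/N` and `k j²/(MN)` differ by an integer.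
-/

namespace ZMod

variable {M N : ℕ}

theorem chineseRemainder_fst (h : M.Coprime N) (j : ZMod (M * N)) :
    (chineseRemainder h j).1 = j.cast := by
  change (castHom (Nat.lcm_dvd (dvd_mul_right M N) (dvd_mul_left N M)) (ZMod M × ZMod N) j).1 = _
  rw [castHom_apply, Prod.fst_zmod_cast]

theorem chineseRemainder_snd (h : M.Coprime N) (j : ZMod (M * N)) :
    (chineseRemainder h j).2 = j.cast := by
  change (castHom (Nat.lcm_dvd (dvd_mul_right M N) (dvd_mul_left N M)) (ZMod M × ZMod N) j).2 = _
  rw [castHom_apply, Prod.snd_zmod_cast]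

def scaledChineseRemainder (h : M.Coprime N) : ZMod (M * N) ≃+ ZMod M × ZMod N :=
  (chineseRemainder h).toAddEquiv.trans
    (AddEquiv.prodCongr (AddAut.mulLeft (unitOfCoprime N h.symm)⁻¹)
      (AddAut.mulLeft (unitOfCoprime M h)⁻¹))

theorem natCast_mul_scaledChineseRemainder_fst [NeZero (M * N)] (h : M.Coprime N)
    (j : ZMod (M * N)) :
    (N : ZMod M) * (scaledChineseRemainder h j).1 = j.val := by
  change (N : ZMod M) * (((unitOfCoprime N h.symm)⁻¹ : (ZMod M)ˣ) * (chineseRemainder h j).1) = _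
  rw [chineseRemainder_fst, ← coe_unitOfCoprime N h.symm, ← mul_assoc, ← Units.val_mul,
    mul_inv_cancel, Units.val_one, one_mul, natCast_val]

theorem natCast_mul_scaledChineseRemainder_snd [NeZero (M * N)] (h : M.Coprime N)
    (j : ZMod (M * N)) :
    (M : ZMod N) * (scaledChineseRemainder h j).2 = j.val := by
  change (M : ZMod N) * (((unitOfCoprime M h)⁻¹ : (ZMod N)ˣ) * (chineseRemainder h j).2) = _
  rw [chineseRemainder_snd, ← coe_unitOfCoprime M h, ← mul_assoc, ← Units.val_mul,
    mul_inv_cancel, Units.val_one, one_mul, natCast_val]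

theorem dvd_natCast_mul_val_sub [NeZero M] {c t : ℕ} {x : ZMod M} (hx : (c : ZMod M) * x = t) :
    (M : ℤ) ∣ c * x.val - t := by
  rw [← intCast_zmod_eq_zero_iff_dvd]
  push_cast
  rw [natCast_zmod_val, hx, sub_self]

end ZMod

theorem Int.dvd_sq_add_sq_sub_sq {M N b a t : ℤ} (hb : M ∣ N * b - t) :
    M ∣ N ^ 2 * b ^ 2 + M ^ 2 * a ^ 2 - t ^ 2 := by
  have hsplit : N ^ 2 * b ^ 2 + M ^ 2 * a ^ 2 - t ^ 2
      = (N * b - t) * (N * b + t) + M * (M * a ^ 2) := by ring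
  rw [hsplit]
  exact dvd_add (hb.mul_right _) (dvd_mul_right _ _)

theorem AddCircle.coe_quadratic_eq_of_dvd {M N : ℕ} (hM : M ≠ 0) (hN : N ≠ 0) (h : M.Coprime N)
    (k t b a : ℤ) (hb : (M : ℤ) ∣ N * b - t) (ha : (N : ℤ) ∣ M * a - t) :
    ((k * N * b ^ 2 / M + k * M * a ^ 2 / N : ℚ) : AddCircle (1 : ℚ))
      = ((k * t ^ 2 / (M * N) : ℚ) : AddCircle (1 : ℚ)) := by
  have hMN : IsCoprime (M : ℤ) N := Nat.isCoprime_iff_coprime.2 h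
  obtain ⟨z, hz⟩ : (M : ℤ) * N ∣ N ^ 2 * b ^ 2 + M ^ 2 * a ^ 2 - t ^ 2 :=
    hMN.mul_dvd (Int.dvd_sq_add_sq_sub_sq hb)
      (by rw [add_comm]; exact Int.dvd_sq_add_sq_sub_sq ha)
  have hzQ : (N ^ 2 * b ^ 2 + M ^ 2 * a ^ 2 - t ^ 2 : ℚ) = M * N * z := by exact_mod_cast hz
  rw [← sub_eq_zero, ← AddCircle.coe_sub, AddCircle.coe_eq_zero_iff]
  refine ⟨k * z, ?_⟩
  rw [zsmul_one]
  field_simp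
  push_cast
  linear_combination (k : ℚ) * hzQ.symm

theorem stmt_1_general (M N : ℕ) (hM : 0 < M) (hN : 0 < N) (h : Nat.Coprime M N)
    (k : ℤ) :
    ∃ φ : ZMod (M * N) ≃+ ZMod M × ZMod N,
      ∀ j : ZMod (M * N),
        (((k * N * ((φ j).1.val : ℤ) ^ 2 : ℚ) / M
            + (k * M * ((φ j).2.val : ℤ) ^ 2 : ℚ) / N : ℚ) : AddCircle (1 : ℚ))
          = (((k * (j.val : ℤ) ^ 2 : ℚ) / (M * N) : ℚ) : AddCircle (1 : ℚ)) := by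
  have : NeZero M := ⟨hM.ne'⟩
  have : NeZero N := ⟨hN.ne'⟩
  refine ⟨ZMod.scaledChineseRemainder h, fun j => ?_⟩
  exact_mod_cast AddCircle.coe_quadratic_eq_of_dvd hM.ne' hN.ne' h k j.val _ _
    (ZMod.dvd_natCast_mul_val_sub (ZMod.natCast_mul_scaledChineseRemainder_fst h j))
    (ZMod.dvd_natCast_mul_val_sub (ZMod.natCast_mul_scaledChineseRemainder_snd h j))

/-- For coprime `M, N`, there is an isomorphism of abelian groups
`ℤ/MN ≅ ℤ/M × ℤ/N` under which the quadratic form `kj²/(MN) mod 1`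
corresponds to `(kN b²/M + kM a²/N) mod 1`. -/
theorem stmt_1 (M N : ℕ) (hM : 0 < M) (hN : 0 < N) (h : Nat.Coprime M N)
    (k : ℤ) (hk : IsCoprime k (M * N : ℤ)) :
    ∃ φ : ZMod (M * N) ≃+ ZMod M × ZMod N,
      ∀ j : ZMod (M * N),
        (((k * N * ((φ j).1.val : ℤ) ^ 2 : ℚ) / M
            + (k * M * ((φ j).2.val : ℤ) ^ 2 : ℚ) / N : ℚ) : AddCircle (1 : ℚ))
          = (((k * (j.val : ℤ) ^ 2 : ℚ) / (M * N) : ℚ) : AddCircle (1 : ℚ)) :=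
  stmt_1_general M N hM hN h k
end

section
/- Let p be an odd prime, a ≥ 1, and n₁, n₂ integers coprime to p. The quadratic forms q₁(j) = n₁ j²/p^a mod 1 and q₂(j) = n₂ j²/p^a mod 1 on Z/p^a are isomorphic (i.e., there is a unit j of Z/p^a with n₁ ≡ n₂ j² mod p^a) if and only if n₁ n₂ is a quadratic residue mod p. -/
/-!
Reduction mod `p` is a surjection `(ℤ/p^a)ˣ → (ℤ/p)ˣ` whose kernel has odd order `p^(a-1)`.
Every element of a group of odd order is a square, so a unit mod `p^a` is a square iff its
reduction mod `p` is. Finally `n₁ = n₂ j²` is equivalent to `n₁ n₂ = (n₂ j)²`.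
-/

theorem Units.isSquare_val_iff {M : Type*} [CommMonoid M] (u : Mˣ) :
    IsSquare (u : M) ↔ IsSquare u := by
  refine ⟨fun ⟨r, hr⟩ => ?_, fun h => h.map (Units.coeHom M)⟩
  have hr_unit : IsUnit r := (IsUnit.mul_iff.mp (hr ▸ u.isUnit)).1
  exact ⟨hr_unit.unit, Units.ext hr⟩

theorem exists_eq_mul_sq_iff_isSquare_mul {G : Type*} [CommGroup G] (a b : G) :
    (∃ j, a = b * j ^ 2) ↔ IsSquare (a * b) := by
  constructor
  · rintro ⟨j, rfl⟩
    exact ⟨b * j, by rw [pow_two]; ac_rfl⟩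
  · rintro ⟨r, hr⟩
    refine ⟨b⁻¹ * r, ?_⟩
    rw [mul_pow, ← mul_assoc, pow_two r, ← hr, mul_comm a b]
    group

theorem isSquare_of_odd_card {G : Type*} [Group G] (hG : Odd (Nat.card G)) (g : G) :
    IsSquare g := by
  obtain ⟨r, hr⟩ := (Nat.Coprime.pow_left_bijective (n := 2) hG.coprime_two_right).2 g
  exact ⟨r, hr ▸ pow_two r⟩

theorem MonoidHom.isSquare_map_iff_of_odd_card_ker {G H : Type*} [CommGroup G] [Group H]
    {f : G →* H} (hf : Function.Surjective f) (hker : Odd (Nat.card f.ker)) (g : G) :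
    IsSquare (f g) ↔ IsSquare g := by
  refine ⟨fun ⟨w, hw⟩ => ?_, fun h => h.map f⟩
  obtain ⟨v, rfl⟩ := hf w
  have hmem : g * (v * v)⁻¹ ∈ f.ker := by simp [hw]
  obtain ⟨s, hs⟩ := isSquare_of_odd_card hker ⟨_, hmem⟩
  refine ⟨s * v, ?_⟩
  have hs' : g * (v * v)⁻¹ = s * s := congrArg Subtype.val hs
  rw [mul_inv_eq_iff_eq_mul.mp hs']
  ac_rfl

theorem ZMod.card_ker_unitsMap_prime_pow {p a : ℕ} (hp : p.Prime) (ha : a ≠ 0) :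
    Nat.card (ZMod.unitsMap (dvd_pow_self p ha)).ker = p ^ (a - 1) := by
  have : NeZero p := ⟨hp.ne_zero⟩
  have : NeZero (p ^ a) := ⟨pow_ne_zero a hp.ne_zero⟩
  have hindex := Subgroup.card_mul_index (ZMod.unitsMap (dvd_pow_self p ha)).ker
  rw [Subgroup.index_ker, MonoidHom.range_eq_top.mpr (ZMod.unitsMap_surjective _),
    Subgroup.card_top, Nat.card_eq_fintype_card (α := (ZMod p)ˣ),
    Nat.card_eq_fintype_card (α := (ZMod (p ^ a))ˣ),
    ZMod.card_units_eq_totient, ZMod.card_units_eq_totient, Nat.totient_prime hp,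
    Nat.totient_prime_pow hp (Nat.pos_of_ne_zero ha)] at hindex
  exact Nat.eq_of_mul_eq_mul_right (Nat.sub_pos_of_lt hp.one_lt) hindex

theorem ZMod.isSquare_unitsMap_prime_pow_iff {p a : ℕ} (hp : p.Prime) (hodd : Odd p)
    (ha : a ≠ 0) (u : (ZMod (p ^ a))ˣ) :
    IsSquare (ZMod.unitsMap (dvd_pow_self p ha) u) ↔ IsSquare u := by
  have : NeZero (p ^ a) := ⟨pow_ne_zero a hp.ne_zero⟩
  refine MonoidHom.isSquare_map_iff_of_odd_card_ker (ZMod.unitsMap_surjective _) ?_ u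
  rw [ZMod.card_ker_unitsMap_prime_pow hp ha]
  exact hodd.pow

theorem Int.exists_sq_modEq_iff_isSquare (m : ℤ) (n : ℕ) :
    (∃ x : ℤ, x ^ 2 ≡ m [ZMOD n]) ↔ IsSquare (m : ZMod n) := by
  simp only [← ZMod.intCast_eq_intCast_iff, Int.cast_pow]
  constructor
  · rintro ⟨x, hx⟩
    exact ⟨x, by rw [← hx, pow_two]⟩
  · rintro ⟨r, hr⟩
    obtain ⟨x, rfl⟩ := ZMod.intCast_surjective r
    exact ⟨x, by rw [hr, pow_two]⟩

theorem Int.isCoprime_prime_pow_of_not_dvd {p : ℕ} (hp : p.Prime) (a : ℕ) {n : ℤ}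
    (h : ¬ (p : ℤ) ∣ n) : IsCoprime n ((p ^ a : ℕ) : ℤ) := by
  push_cast
  exact ((Nat.prime_iff_prime_int.mp hp).coprime_iff_not_dvd.mpr h).pow_left.symm

/-- For `p` an odd prime, `a ≥ 1` and `n₁, n₂` coprime to `p`, the quadratic forms
`n₁ j²/p^a` and `n₂ j²/p^a` on `ℤ/p^a` are isomorphic (there is a unit `j` with
`n₁ ≡ n₂ j² mod p^a`) iff `n₁ n₂` is a quadratic residue mod `p`. -/
theorem stmt_3 (p : ℕ) (hp : p.Prime) (hodd : Odd p) (a : ℕ) (ha : 1 ≤ a)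
    (n₁ n₂ : ℤ) (h₁ : ¬ (p : ℤ) ∣ n₁) (h₂ : ¬ (p : ℤ) ∣ n₂) :
    (∃ j : (ZMod (p ^ a))ˣ, (n₁ : ZMod (p ^ a)) = (n₂ : ZMod (p ^ a)) * (j : ZMod (p ^ a)) ^ 2)
      ↔ ∃ x : ℤ, x ^ 2 ≡ n₁ * n₂ [ZMOD p] := by
  have ha₀ : a ≠ 0 := Nat.one_le_iff_ne_zero.mp ha
  set u₁ := ZMod.unitOfIsCoprime n₁ (Int.isCoprime_prime_pow_of_not_dvd hp a h₁)
  set u₂ := ZMod.unitOfIsCoprime n₂ (Int.isCoprime_prime_pow_of_not_dvd hp a h₂)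
  have hreduce : (ZMod.unitsMap (dvd_pow_self p ha₀) (u₁ * u₂) : ZMod p) = (n₁ * n₂ : ℤ) := by
    rw [ZMod.unitsMap_val, Units.val_mul, ZMod.coe_unitOfIsCoprime, ZMod.coe_unitOfIsCoprime,
      ← Int.cast_mul, ZMod.cast_intCast (dvd_pow_self p ha₀)]
  calc (∃ j : (ZMod (p ^ a))ˣ, (n₁ : ZMod (p ^ a)) = n₂ * (j : ZMod (p ^ a)) ^ 2)
      ↔ ∃ j, u₁ = u₂ * j ^ 2 := by simp [Units.ext_iff, u₁, u₂]
    _ ↔ IsSquare (u₁ * u₂) := exists_eq_mul_sq_iff_isSquare_mul u₁ u₂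
    _ ↔ IsSquare (ZMod.unitsMap (dvd_pow_self p ha₀) (u₁ * u₂)) :=
      (ZMod.isSquare_unitsMap_prime_pow_iff hp hodd ha₀ _).symm
    _ ↔ IsSquare ((n₁ * n₂ : ℤ) : ZMod p) := by rw [← Units.isSquare_val_iff, hreduce]
    _ ↔ ∃ x : ℤ, x ^ 2 ≡ n₁ * n₂ [ZMOD p] := (Int.exists_sq_modEq_iff_isSquare _ _).symm
end

section
/- In the dihedral group fusion-type decomposition: for odd N > 1 the subring of the SO(N)₂ fusion ring spanned by 1, Z, Y₁, ..., Y_{(N-1)/2} is closed under multiplication and has rank (N+3)/2, equal to the number of conjugacy classes of the dihedral group of order 2N. -/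
/-!
Since the `ℤ`-span of a set `S` is closed under multiplication as soon as all products of two
elements of `S` lie in it, it suffices to multiply the basis elements `1, Z, Y₁, …, Y_{(N-1)/2}`
pairwise, which the fusion rules do explicitly. For odd `N` the indices `min (i + j) (N - i - j)`
and `j - i` occurring there stay in `[1, (N-1)/2]`.
-/

theorem Submodule.mul_mem_span_of_mul_mem_span {A R : Type*} [CommSemiring A] [Semiring R]
    [Algebra A R] {S : Set R} (hS : ∀ a ∈ S, ∀ b ∈ S, a * b ∈ Submodule.span A S)
    {x y : R} (hx : x ∈ Submodule.span A S) (hy : y ∈ Submodule.span A S) :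
    x * y ∈ Submodule.span A S := by
  have hle : Submodule.span A S * Submodule.span A S ≤ Submodule.span A S := by
    rw [Submodule.span_mul_span, Submodule.span_le]
    rintro _ ⟨a, ha, b, hb, rfl⟩
    exact hS a ha b hb
  exact hle (Submodule.mul_mem_mul hx hy)

theorem Nat.min_add_sub_sub_mem_Icc {N i j : ℕ} (hN : Odd N)
    (hi : i ∈ Set.Icc 1 ((N - 1) / 2)) (hj : j ∈ Set.Icc 1 ((N - 1) / 2)) :
    min (i + j) (N - i - j) ∈ Set.Icc 1 ((N - 1) / 2) := by
  obtain ⟨m, rfl⟩ := hN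
  simp only [Set.mem_Icc] at *
  omega

namespace SOTwoFusion

variable {R : Type*} [CommRing R] {N : ℕ} {z : R} {Y : ℕ → R}

theorem Y_mem_span {i : ℕ} (hi : i ∈ Set.Icc 1 ((N - 1) / 2)) :
    Y i ∈ Submodule.span ℤ (insert (1 : R) (insert z (Y '' Set.Icc 1 ((N - 1) / 2)))) :=
  Submodule.subset_span (Set.mem_insert_of_mem _ (Set.mem_insert_of_mem _ ⟨i, hi, rfl⟩))

theorem Y_mul_Y_mem_span (hN : Odd N)
    (hYY : ∀ i j, 1 ≤ i → i < j → j ≤ (N - 1) / 2 →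
      Y i * Y j = Y (min (i + j) (N - i - j)) + Y (j - i))
    (hYY' : ∀ i, 1 ≤ i → i ≤ (N - 1) / 2 →
      Y i * Y i = 1 + z + Y (min (2 * i) (N - 2 * i)))
    {i j : ℕ} (hi : i ∈ Set.Icc 1 ((N - 1) / 2)) (hj : j ∈ Set.Icc 1 ((N - 1) / 2)) :
    Y i * Y j ∈ Submodule.span ℤ (insert (1 : R) (insert z (Y '' Set.Icc 1 ((N - 1) / 2)))) := by
  wlog hij : i ≤ j generalizing i j
  · rw [mul_comm]
    exact this hj hi (le_of_not_ge hij)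
  have hsum := Nat.min_add_sub_sub_mem_Icc hN hi hj
  obtain ⟨hi1, hi2⟩ := hi
  obtain ⟨hj1, hj2⟩ := hj
  rcases hij.lt_or_eq with hlt | rfl
  · rw [hYY i j hi1 hlt hj2]
    exact add_mem (Y_mem_span hsum) (Y_mem_span ⟨by omega, by omega⟩)
  · rw [hYY' i hi1 hi2, two_mul, ← Nat.sub_sub]
    exact add_mem (add_mem (Submodule.subset_span (Set.mem_insert _ _))
      (Submodule.subset_span (Set.mem_insert_of_mem _ (Set.mem_insert _ _)))) (Y_mem_span hsum)

theorem mul_mem_span_of_mem (hN : Odd N) (hzz : z * z = 1)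
    (hzY : ∀ i, 1 ≤ i → i ≤ (N - 1) / 2 → z * Y i = Y i)
    (hYY : ∀ i j, 1 ≤ i → i < j → j ≤ (N - 1) / 2 →
      Y i * Y j = Y (min (i + j) (N - i - j)) + Y (j - i))
    (hYY' : ∀ i, 1 ≤ i → i ≤ (N - 1) / 2 →
      Y i * Y i = 1 + z + Y (min (2 * i) (N - 2 * i)))
    {a b : R} (ha : a ∈ insert (1 : R) (insert z (Y '' Set.Icc 1 ((N - 1) / 2))))
    (hb : b ∈ insert (1 : R) (insert z (Y '' Set.Icc 1 ((N - 1) / 2)))) :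
    a * b ∈ Submodule.span ℤ (insert (1 : R) (insert z (Y '' Set.Icc 1 ((N - 1) / 2)))) := by
  have hz : z ∈ insert (1 : R) (insert z (Y '' Set.Icc 1 ((N - 1) / 2))) :=
    Set.mem_insert_of_mem _ (Set.mem_insert _ _)
  rcases ha with rfl | rfl | ⟨i, hi, rfl⟩
  · rw [one_mul]
    exact Submodule.subset_span hb
  · rcases hb with rfl | rfl | ⟨j, ⟨hj1, hj2⟩, rfl⟩
    · rw [mul_one]
      exact Submodule.subset_span hz
    · rw [hzz]
      exact Submodule.subset_span (Set.mem_insert _ _)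
    · rw [hzY j hj1 hj2]
      exact Y_mem_span ⟨hj1, hj2⟩
  · rcases hb with rfl | rfl | ⟨j, hj, rfl⟩
    · rw [mul_one]
      exact Y_mem_span hi
    · rw [mul_comm, hzY i hi.1 hi.2]
      exact Y_mem_span hi
    · exact Y_mul_Y_mem_span hN hYY hYY' hi hj

end SOTwoFusion

theorem stmt_16_general (N : ℕ) (hN : Odd N)
    (R : Type*) [CommRing R] (z : R) (Y : ℕ → R)
    (hzz : z * z = 1)
    (hzY : ∀ i, 1 ≤ i → i ≤ (N - 1) / 2 → z * Y i = Y i)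
    (hYY : ∀ i j, 1 ≤ i → i < j → j ≤ (N - 1) / 2 →
      Y i * Y j = Y (min (i + j) (N - i - j)) + Y (j - i))
    (hYY' : ∀ i, 1 ≤ i → i ≤ (N - 1) / 2 →
      Y i * Y i = 1 + z + Y (min (2 * i) (N - 2 * i))) :
    (∀ x ∈ Submodule.span ℤ (insert (1 : R) (insert z (Y '' Set.Icc 1 ((N - 1) / 2)))),
      ∀ y ∈ Submodule.span ℤ (insert (1 : R) (insert z (Y '' Set.Icc 1 ((N - 1) / 2)))),
        x * y ∈ Submodule.span ℤ (insert (1 : R) (insert z (Y '' Set.Icc 1 ((N - 1) / 2))))) ∧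
    2 + (N - 1) / 2 = (N + 3) / 2 ∧
    Nat.card (ConjClasses (DihedralGroup N)) = (N + 3) / 2 := by
  refine ⟨fun x hx y hy => ?_, by obtain ⟨m, rfl⟩ := hN; omega,
    DihedralGroup.card_conjClasses_odd hN⟩
  exact Submodule.mul_mem_span_of_mul_mem_span
    (fun a ha b hb => SOTwoFusion.mul_mem_span_of_mem hN hzz hzY hYY hYY' ha hb) hx hy

/-- For odd `N > 1`, in any commutative ring realizing the `SO(N)₂` fusion
rules, the subring spanned by `1, Z, Y₁, …, Y_{(N-1)/2}` is closed under
multiplication, and its rank `2 + (N-1)/2 = (N+3)/2` equals the number of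
conjugacy classes of the dihedral group of order `2N`. -/
theorem stmt_16 (N : ℕ) (hN : Odd N) (h1 : 1 < N)
    (R : Type*) [CommRing R] (z : R) (Y : ℕ → R)
    (hzz : z * z = 1)
    (hzY : ∀ i, 1 ≤ i → i ≤ (N - 1) / 2 → z * Y i = Y i)
    (hYY : ∀ i j, 1 ≤ i → i < j → j ≤ (N - 1) / 2 →
      Y i * Y j = Y (min (i + j) (N - i - j)) + Y (j - i))
    (hYY' : ∀ i, 1 ≤ i → i ≤ (N - 1) / 2 →
      Y i * Y i = 1 + z + Y (min (2 * i) (N - 2 * i))) :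
    (∀ x ∈ Submodule.span ℤ (insert (1 : R) (insert z (Y '' Set.Icc 1 ((N - 1) / 2)))),
      ∀ y ∈ Submodule.span ℤ (insert (1 : R) (insert z (Y '' Set.Icc 1 ((N - 1) / 2)))),
        x * y ∈ Submodule.span ℤ (insert (1 : R) (insert z (Y '' Set.Icc 1 ((N - 1) / 2))))) ∧
    2 + (N - 1) / 2 = (N + 3) / 2 ∧
    Nat.card (ConjClasses (DihedralGroup N)) = (N + 3) / 2 :=
  stmt_16_general N hN R z Y hzz hzY hYY hYY'
end
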